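/- arXiv:2210.15260 — 5 statements merged into one kernel-verified Lean document; each statement's English description precedes it below -/
import Mathlib

section
/- For every nonnegative integer n, the monic Pastro polynomial P_n satisfies the generalized eigenvalue equation Y P_n = λ_n X P_n with eigenvalue λ_n = -b^{-1} q^n; explicitly, for all real x: (x - a^{-1}q) P_n(qx) + (a^{-1}q - b^{-1}x) P_n(x) = -b^{-1} q^n ( (x - q) P_n(q^{-1}x) + (q - bx) P_n(x) ). -/
/-! Substituting `x = q y`, the monomial `c_k x^k` contributes
`q c_k y^k (y (q^k - b⁻¹)(q^k - q^n) + (1 - q^k)(a⁻¹ q^k - b⁻¹ q^n))` to the difference of the two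
sides. The first-order recurrence of the coefficients `c_k`, read off from the q-Pochhammer
quotients, says that the `y^(k+1)`-part of the `k`-th term cancels the `y^(k+1)`-part of the
`(k+1)`-st, so the sum telescopes; both ends vanish because of the factors `1 - q^0` and `q^n - q^n`.
-/

/-- The q-Pochhammer symbol `(z;q)_k = ∏_{j=0}^{k-1} (1 - z q^j)`. -/
noncomputable def qPoch (q z : ℝ) (k : ℕ) : ℝ :=
  ∏ j ∈ Finset.range k, (1 - z * q ^ j)

/-- Coefficient `c_{n,k}` of the monic Pastro polynomial. -/
noncomputable def pastroCoeff (q a b : ℝ) (n k : ℕ) : ℝ :=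
  (qPoch q (a⁻¹ * b * q ^ (1 - (n : ℤ))) n * qPoch q q n /
      (qPoch q (q ^ (-(n : ℤ))) n * qPoch q b n)) *
    (qPoch q (q ^ (-(n : ℤ))) k * qPoch q b k /
      (qPoch q (a⁻¹ * b * q ^ (1 - (n : ℤ))) k * qPoch q q k))

/-- The monic Pastro polynomial `P_n(x;a,b;q)`. -/
noncomputable def pastroP (q a b : ℝ) (n : ℕ) (x : ℝ) : ℝ :=
  ∑ k ∈ Finset.range (n + 1), pastroCoeff q a b n k * x ^ k

lemma qPoch_succ (q z : ℝ) (k : ℕ) :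
    qPoch q z (k + 1) = qPoch q z k * (1 - z * q ^ k) :=
  Finset.prod_range_succ _ _

lemma qPoch_ne_zero {q z : ℝ} {k : ℕ} (h : ∀ j : ℕ, 1 - z * q ^ j ≠ 0) : qPoch q z k ≠ 0 :=
  Finset.prod_ne_zero_iff.mpr fun j _ => h j

lemma qPoch_quotient_succ (q A B C D : ℝ) (k : ℕ) (hC : qPoch q C (k + 1) ≠ 0)
    (hD : qPoch q D (k + 1) ≠ 0) :
    qPoch q A (k + 1) * qPoch q B (k + 1) / (qPoch q C (k + 1) * qPoch q D (k + 1)) *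
        ((1 - C * q ^ k) * (1 - D * q ^ k)) =
      qPoch q A k * qPoch q B k / (qPoch q C k * qPoch q D k) *
        ((1 - A * q ^ k) * (1 - B * q ^ k)) := by
  rw [qPoch_succ] at hC hD ⊢
  rw [qPoch_succ, qPoch_succ, qPoch_succ]
  have hCD : qPoch q C k * qPoch q D k ≠ 0 :=
    mul_ne_zero (left_ne_zero_of_mul hC) (left_ne_zero_of_mul hD)
  rw [div_mul_eq_mul_div, div_mul_eq_mul_div, div_eq_div_iff (mul_ne_zero hC hD) hCD]
  ring

lemma sum_range_pow_telescope {R : Type*} [CommRing R] (n : ℕ) (u v : ℕ → R) (hv : v 0 = 0)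
    (hu : u n = 0) (huv : ∀ k < n, v (k + 1) = -u k) (y : R) :
    ∑ k ∈ Finset.range (n + 1), (u k * y ^ (k + 1) + v k * y ^ k) = 0 := by
  rw [Finset.sum_add_distrib, Finset.sum_range_succ, Finset.sum_range_succ', hu, hv]
  simp only [zero_mul, add_zero]
  rw [← Finset.sum_add_distrib]
  exact Finset.sum_eq_zero fun k hk => by rw [huv k (Finset.mem_range.mp hk)]; ring

lemma pastroCoeff_succ (q a b : ℝ) (hq : q ≠ 0) (hq1 : ∀ k : ℤ, k ≠ 0 → q ^ k ≠ 1)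
    (habq : ∀ m : ℤ, a⁻¹ * b * q ^ m ≠ 1) (n k : ℕ) :
    pastroCoeff q a b n (k + 1) * ((1 - a⁻¹ * b * q ^ (1 - (n : ℤ)) * q ^ k) * (1 - q * q ^ k)) =
      pastroCoeff q a b n k * ((1 - q ^ (-(n : ℤ)) * q ^ k) * (1 - b * q ^ k)) := by
  have hC : qPoch q (a⁻¹ * b * q ^ (1 - (n : ℤ))) (k + 1) ≠ 0 := qPoch_ne_zero fun j h => by
    refine habq (1 - n + j) ?_
    rw [zpow_add₀ hq, zpow_natCast]
    linear_combination -h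
  have hD : qPoch q q (k + 1) ≠ 0 := qPoch_ne_zero fun j h => by
    refine hq1 (j + 1) (by omega) ?_
    rw [show ((j : ℤ) + 1) = ((j + 1 : ℕ) : ℤ) by push_cast; ring, zpow_natCast, pow_succ']
    linear_combination -h
  rw [pastroCoeff, pastroCoeff, mul_assoc _ (_ / _), qPoch_quotient_succ _ _ _ _ _ _ hC hD,
    ← mul_assoc]

lemma pastroCoeff_recurrence (q a b : ℝ) (hq : q ≠ 0) (hq1 : ∀ k : ℤ, k ≠ 0 → q ^ k ≠ 1)
    (hb : b ≠ 0) (habq : ∀ m : ℤ, a⁻¹ * b * q ^ m ≠ 1) (n k : ℕ) :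
    pastroCoeff q a b n (k + 1) * ((1 - q ^ (k + 1)) * (a⁻¹ * q ^ (k + 1) - b⁻¹ * q ^ n)) =
      -(pastroCoeff q a b n k * ((q ^ k - b⁻¹) * (q ^ k - q ^ n))) := by
  have h := pastroCoeff_succ q a b hq hq1 habq n k
  have e1 : q ^ (1 - (n : ℤ)) * q ^ n = q := by
    rw [← zpow_natCast, ← zpow_add₀ hq]; simp
  have e2 : q ^ (-(n : ℤ)) * q ^ n = 1 := by
    rw [← zpow_natCast, ← zpow_add₀ hq]; simp
  have hb' : b * b⁻¹ = 1 := mul_inv_cancel₀ hb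
  set c := pastroCoeff q a b n
  -- `h` times `-b⁻¹ q^n`, clearing the negative powers of `q` with `e1`, `e2`
  linear_combination (-b⁻¹ * q ^ n) * h - c (k + 1) * a⁻¹ * q ^ k * (1 - q ^ (k + 1)) * b * b⁻¹ * e1
    + (c k * q ^ k * (q ^ n - q ^ k) - c (k + 1) * a⁻¹ * q ^ k * (1 - q ^ (k + 1)) * q) * hb'
    + c k * q ^ k * (b⁻¹ - q ^ k * b * b⁻¹) * e2

lemma gevp_of_coeff_recurrence (q a b : ℝ) (hq : q ≠ 0) (hb : b ≠ 0) (n : ℕ) (c : ℕ → ℝ)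
    (hc : ∀ k < n, c (k + 1) * ((1 - q ^ (k + 1)) * (a⁻¹ * q ^ (k + 1) - b⁻¹ * q ^ n)) =
      -(c k * ((q ^ k - b⁻¹) * (q ^ k - q ^ n))))
    (P : ℝ → ℝ) (hP : ∀ x, P x = ∑ k ∈ Finset.range (n + 1), c k * x ^ k) (x : ℝ) :
    (x - a⁻¹ * q) * P (q * x) + (a⁻¹ * q - b⁻¹ * x) * P x =
      -b⁻¹ * q ^ n * ((x - q) * P (q⁻¹ * x) + (q - b * x) * P x) := by
  obtain ⟨y, rfl⟩ : ∃ y, x = q * y := ⟨q⁻¹ * x, by field_simp⟩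
  have htel := sum_range_pow_telescope n (fun k => c k * ((q ^ k - b⁻¹) * (q ^ k - q ^ n)))
    (fun k => c k * ((1 - q ^ k) * (a⁻¹ * q ^ k - b⁻¹ * q ^ n))) (by simp) (by simp) hc y
  have hb' : b * b⁻¹ = 1 := mul_inv_cancel₀ hb
  rw [← sub_eq_zero, inv_mul_cancel_left₀ hq]
  simp only [hP, Finset.mul_sum, ← Finset.sum_add_distrib, ← Finset.sum_sub_distrib] at htel ⊢
  rw [← mul_zero q, ← htel, Finset.mul_sum]
  refine Finset.sum_congr rfl fun k _ => ?_
  simp only [mul_pow, pow_succ]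
  linear_combination (-(c k * q * q ^ k * q ^ n * y * y ^ k)) * hb'

theorem pastro_GEVP_general (q a b : ℝ) (hq : q ≠ 0) (hq1 : ∀ k : ℤ, k ≠ 0 → q ^ k ≠ 1)
    (hb : b ≠ 0)
    (habq : ∀ m : ℤ, a⁻¹ * b * q ^ m ≠ 1)
    (n : ℕ) (x : ℝ) :
    (x - a⁻¹ * q) * pastroP q a b n (q * x) + (a⁻¹ * q - b⁻¹ * x) * pastroP q a b n x =
      -b⁻¹ * q ^ n *
        ((x - q) * pastroP q a b n (q⁻¹ * x) + (q - b * x) * pastroP q a b n x) :=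
  gevp_of_coeff_recurrence q a b hq hb n (pastroCoeff q a b n)
    (fun k _ => pastroCoeff_recurrence q a b hq hq1 hb habq n k) (pastroP q a b n) (fun _ => rfl) x

/-- The Pastro polynomial `P_n` solves the generalized eigenvalue problem
`Y P_n = λ_n X P_n` with `λ_n = -b⁻¹ q^n`. -/
theorem pastro_GEVP (q a b : ℝ) (hq : q ≠ 0) (hq1 : ∀ k : ℤ, k ≠ 0 → q ^ k ≠ 1)
    (ha : a ≠ 0) (hb : b ≠ 0)
    (hbq : ∀ m : ℤ, b * q ^ m ≠ 1) (habq : ∀ m : ℤ, a⁻¹ * b * q ^ m ≠ 1)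
    (n : ℕ) (x : ℝ) :
    (x - a⁻¹ * q) * pastroP q a b n (q * x) + (a⁻¹ * q - b⁻¹ * x) * pastroP q a b n x =
      -b⁻¹ * q ^ n *
        ((x - q) * pastroP q a b n (q⁻¹ * x) + (q - b * x) * pastroP q a b n x) :=
  pastro_GEVP_general q a b hq hq1 hb habq n x
end

section
/- The operator X produces a q-shift of the parameter b when acting on the Pastro polynomials: for every nonnegative integer n and all real x, (x - q) P_n(q^{-1}x; a, b; q) + (q - bx) P_n(x; a, b; q) = q^{-n} (1 - b q^n) x P_n(x; a, bq; q). -/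
/-!
Comparing coefficients of `x^(k+1)`, the identity says
`c_k (q^(-k) - b) + q c_(k+1) (1 - q^(-k-1)) = q^(-n) (1 - b q^n) c'_k`, where `c'` are the
coefficients for the parameter `b q`. Both `c_(k+1)` and `c'_k` are explicit rational multiples
of `c_k`: the first by the term ratio of the terminating series, the second because `b ↦ b q`
sends `z = a⁻¹ b q^(1-n)` to `z q`, and `(c q; q)_k = (c; q)_k (1 - c q^k) / (1 - c)`. After
dividing out `c_k` what remains is an identity of rational functions. The top coefficient needs
no separate treatment, since `c_(n+1) = 0` as `(q^(-n); q)_(n+1)` contains the factor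
`1 - q^(-n) q^n`.
-/

open Finset

lemma mul_zpow_mul_zpow_ne_one {q c : ℝ} (hq : q ≠ 0) (hc : ∀ m : ℤ, c * q ^ m ≠ 1) (m₀ : ℤ) :
    ∀ m : ℤ, c * q ^ m₀ * q ^ m ≠ 1 := fun m => by
  rw [mul_assoc, ← zpow_add₀ hq]
  exact hc _

lemma one_sub_mul_pow_ne_zero {q c : ℝ} (hc : ∀ m : ℤ, c * q ^ m ≠ 1) (j : ℕ) :
    1 - c * q ^ j ≠ 0 :=
  sub_ne_zero.mpr (by exact_mod_cast (hc j).symm)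

namespace qPoch

variable {q : ℝ}

lemma succ (q z : ℝ) (k : ℕ) : qPoch q z (k + 1) = qPoch q z k * (1 - z * q ^ k) :=
  prod_range_succ _ _

lemma one_sub_mul_mul (q z : ℝ) (k : ℕ) :
    (1 - z) * qPoch q (z * q) k = qPoch q z k * (1 - z * q ^ k) := by
  induction k with
  | zero => simp [qPoch]
  | succ k ih =>
    rw [succ, succ, ← mul_assoc, ih]
    ring

lemma eq_zero {z : ℝ} {j k : ℕ} (hjk : j < k) (h : z * q ^ j = 1) : qPoch q z k = 0 :=
  prod_eq_zero (mem_range.mpr hjk) (by rw [h, sub_self])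

lemma ne_zero {z : ℝ} (hz : ∀ m : ℤ, z * q ^ m ≠ 1) (k : ℕ) : qPoch q z k ≠ 0 :=
  prod_ne_zero_iff.mpr fun j _ => one_sub_mul_pow_ne_zero hz j

lemma zpow_neg_eq_zero (hq : q ≠ 0) {n k : ℕ} (hnk : n < k) : qPoch q (q ^ (-(n : ℤ))) k = 0 :=
  eq_zero hnk (by rw [← zpow_natCast, ← zpow_add₀ hq, neg_add_cancel, zpow_zero])

lemma mul_eq_div (q : ℝ) {z : ℝ} (hz : 1 - z ≠ 0) (k : ℕ) :
    qPoch q (z * q) k = qPoch q z k * (1 - z * q ^ k) / (1 - z) :=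
  (eq_div_iff hz).mpr (by rw [mul_comm, one_sub_mul_mul])

end qPoch

namespace pastroCoeff

variable {q a b : ℝ} (hq : q ≠ 0) (hq1 : ∀ m : ℤ, m ≠ 0 → q ^ m ≠ 1)
  (hbq : ∀ m : ℤ, b * q ^ m ≠ 1) (habq : ∀ m : ℤ, a⁻¹ * b * q ^ m ≠ 1)

include hq in
lemma eq_zero_of_lt (n : ℕ) {k : ℕ} (hnk : n < k) : pastroCoeff q a b n k = 0 := by
  rw [pastroCoeff, qPoch.zpow_neg_eq_zero hq hnk, zero_mul, zero_div, mul_zero]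

include hq hq1 habq in
lemma succ_mul (n k : ℕ) :
    pastroCoeff q a b n (k + 1) * ((1 - a⁻¹ * b * q ^ (1 - (n : ℤ)) * q ^ k) * (1 - q ^ (k + 1))) =
      pastroCoeff q a b n k * ((1 - q ^ (-(n : ℤ)) * q ^ k) * (1 - b * q ^ k)) := by
  have hz := mul_zpow_mul_zpow_ne_one hq habq (1 - n)
  have hzk := one_sub_mul_pow_ne_zero hz k
  have hqk : 1 - q ^ (k + 1) ≠ 0 :=
    sub_ne_zero.mpr (by exact_mod_cast (hq1 (k + 1 : ℕ) (by omega)).symm)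
  have := qPoch.ne_zero hz k
  unfold pastroCoeff
  rw [qPoch.succ, qPoch.succ, qPoch.succ, qPoch.succ, ← pow_succ']
  generalize qPoch q (a⁻¹ * b * q ^ (1 - (n : ℤ))) n * qPoch q q n /
      (qPoch q (q ^ (-(n : ℤ))) n * qPoch q b n) = N at *
  -- `field_simp` would rewrite `1 - z * q ^ k` to `1 - q ^ k * z` and lose sight of `hzk`
  generalize 1 - a⁻¹ * b * q ^ (1 - (n : ℤ)) * q ^ k = δ at *
  field_simp

include hq hbq habq in
lemma shift_mul (n k : ℕ) :
    pastroCoeff q a (b * q) n k * ((1 - b * q ^ n) * (1 - a⁻¹ * b * q ^ (1 - (n : ℤ)) * q ^ k)) =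
      pastroCoeff q a b n k *
        ((1 - a⁻¹ * b * q ^ (1 - (n : ℤ)) * q ^ n) * (1 - b * q ^ k)) := by
  have hz := mul_zpow_mul_zpow_ne_one hq habq (1 - n)
  have hb0 : 1 - b ≠ 0 := by simpa using one_sub_mul_pow_ne_zero hbq 0
  have hz0 : 1 - a⁻¹ * b * q ^ (1 - (n : ℤ)) ≠ 0 := by simpa using one_sub_mul_pow_ne_zero hz 0
  have hbn := one_sub_mul_pow_ne_zero hbq n
  have hzk := one_sub_mul_pow_ne_zero hz k
  have := qPoch.ne_zero hbq n
  have := qPoch.ne_zero hz k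
  unfold pastroCoeff
  rw [show a⁻¹ * (b * q) * q ^ (1 - (n : ℤ)) = a⁻¹ * b * q ^ (1 - (n : ℤ)) * q by ring,
    qPoch.mul_eq_div q hb0, qPoch.mul_eq_div q hb0, qPoch.mul_eq_div q hz0,
    qPoch.mul_eq_div q hz0]
  generalize a⁻¹ * b * q ^ (1 - (n : ℤ)) = z at *
  generalize 1 - b * q ^ n = β at *
  generalize 1 - z * q ^ k = δ at *
  field_simp

include hq hq1 hbq habq in
lemma X_contiguity (n k : ℕ) :
    pastroCoeff q a b n k * ((q ^ k)⁻¹ - b) +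
        q * pastroCoeff q a b n (k + 1) * (1 - (q ^ (k + 1))⁻¹) =
      q ^ (-(n : ℤ)) * (1 - b * q ^ n) * pastroCoeff q a (b * q) n k := by
  have hsucc := succ_mul hq hq1 habq n k
  have hshift := shift_mul hq hbq habq n k
  rw [zpow_neg, zpow_natCast] at *
  apply mul_right_cancel₀ (one_sub_mul_pow_ne_zero (mul_zpow_mul_zpow_ne_one hq habq (1 - n)) k)
  linear_combination (norm := skip) -((q ^ k)⁻¹) * hsucc - (q ^ n)⁻¹ * hshift
  generalize a⁻¹ * b * q ^ (1 - (n : ℤ)) = z at *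
  field_simp
  ring

end pastroCoeff

noncomputable def pastroX (q b : ℝ) (f : ℝ → ℝ) (x : ℝ) : ℝ :=
  (x - q) * f (q⁻¹ * x) + (q - b * x) * f x

lemma pastroX_sum (q b x : ℝ) (c : ℕ → ℝ) (n : ℕ) (hc : c (n + 1) = 0) :
    pastroX q b (fun y => ∑ k ∈ range (n + 1), c k * y ^ k) x =
      ∑ k ∈ range (n + 1),
        (c k * ((q ^ k)⁻¹ - b) + q * c (k + 1) * (1 - (q ^ (k + 1))⁻¹)) * x ^ (k + 1) := by
  have hlow : ∑ k ∈ range (n + 1), q * c k * (1 - (q ^ k)⁻¹) * x ^ k =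
      ∑ k ∈ range (n + 1), q * c (k + 1) * (1 - (q ^ (k + 1))⁻¹) * x ^ (k + 1) := by
    have h := sum_range_succ' (fun k => q * c k * (1 - (q ^ k)⁻¹) * x ^ k) (n + 1)
    rw [sum_range_succ, hc] at h
    simpa using h
  calc pastroX q b (fun y => ∑ k ∈ range (n + 1), c k * y ^ k) x
      = ∑ k ∈ range (n + 1),
          (c k * ((q ^ k)⁻¹ - b) * x ^ (k + 1) + q * c k * (1 - (q ^ k)⁻¹) * x ^ k) := by
        simp only [pastroX, mul_sum, ← sum_add_distrib]
        refine sum_congr rfl fun k _ => ?_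
        rw [mul_pow, inv_pow]
        ring
    _ = _ := by
        rw [sum_add_distrib, hlow, ← sum_add_distrib]
        exact sum_congr rfl fun k _ => by ring

theorem pastro_X_contiguity_general (q a b : ℝ) (hq : q ≠ 0) (hq1 : ∀ k : ℤ, k ≠ 0 → q ^ k ≠ 1)
    (hbq : ∀ m : ℤ, b * q ^ m ≠ 1) (habq : ∀ m : ℤ, a⁻¹ * b * q ^ m ≠ 1)
    (n : ℕ) (x : ℝ) :
    (x - q) * pastroP q a b n (q⁻¹ * x) + (q - b * x) * pastroP q a b n x =
      q ^ (-(n : ℤ)) * (1 - b * q ^ n) * x * pastroP q a (b * q) n x := by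
  change pastroX q b (fun y => ∑ k ∈ range (n + 1), pastroCoeff q a b n k * y ^ k) x = _
  rw [pastroX_sum q b x _ n (pastroCoeff.eq_zero_of_lt hq n (Nat.lt_succ_self n)), pastroP,
    mul_sum]
  refine sum_congr rfl fun k _ => ?_
  rw [pastroCoeff.X_contiguity hq hq1 hbq habq n k]
  ring

/-- The operator `X` produces a q-shift of the parameter `b` on the Pastro
polynomials: `X P_n(x;a,b;q) = q^(-n)(1 - b q^n) x P_n(x;a,bq;q)`. -/
theorem pastro_X_contiguity (q a b : ℝ) (hq : q ≠ 0) (hq1 : ∀ k : ℤ, k ≠ 0 → q ^ k ≠ 1)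
    (ha : a ≠ 0) (hb : b ≠ 0)
    (hbq : ∀ m : ℤ, b * q ^ m ≠ 1) (habq : ∀ m : ℤ, a⁻¹ * b * q ^ m ≠ 1)
    (n : ℕ) (x : ℝ) :
    (x - q) * pastroP q a b n (q⁻¹ * x) + (q - b * x) * pastroP q a b n x =
      q ^ (-(n : ℤ)) * (1 - b * q ^ n) * x * pastroP q a (b * q) n x :=
  pastro_X_contiguity_general q a b hq hq1 hbq habq n x
end

section
/- The triplet of q-difference operators X, Y, Z satisfies the three Pastro-algebra commutation relations: for every function f : ℝ → ℝ and every real x ≠ 0, (i) q·(XY - q^{-1}YX)f(x), i.e. q(XY f)(x) - (YX f)(x) = q(q-1)( a^{-1} (Xf)(x) + (Yf)(x) ); (ii) q(YZ f)(x) - (ZY f)(x) = (q-1)( -b^{-1}q^{-1}(1+q) (Xf)(x) - b (Yf)(x) + a^{-1}q (Zf)(x) + a^{-1}b^{-1}(1-b)(a-bq) f(x) ); (iii) q(ZX f)(x) - (XZ f)(x) = (q-1)( -b (Xf)(x) + q (Zf)(x) ). -/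
/-!
Each relation is an identity between linear combinations of values of `f` on the lattice
`q^ℤ x`: after cancelling `q⁻¹ * (q * x) = x` and `q * (q⁻¹ * x) = x`, the coefficients of each
value agree as rational functions of `q, a, b, x`.
-/

/-- The q-difference operator `X`. -/
noncomputable def opX (q b : ℝ) (f : ℝ → ℝ) (x : ℝ) : ℝ :=
  (x - q) * f (q⁻¹ * x) + (q - b * x) * f x

/-- The q-difference operator `Y`. -/
noncomputable def opY (q a b : ℝ) (f : ℝ → ℝ) (x : ℝ) : ℝ :=
  (x - a⁻¹ * q) * f (q * x) + (a⁻¹ * q - b⁻¹ * x) * f x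

/-- The q-difference operator `Z`. -/
noncomputable def opZ (q b : ℝ) (f : ℝ → ℝ) (x : ℝ) : ℝ :=
  (1 - q * x⁻¹) * f (q⁻¹ * x) + (q * x⁻¹ - b) * f x

section Commutation

variable {q a b : ℝ}

theorem opX_opY_commutation (hq : q ≠ 0) (hb : b ≠ 0) (f : ℝ → ℝ) (x : ℝ) :
    q * opX q b (opY q a b f) x - opY q a b (opX q b f) x =
      q * (q - 1) * (a⁻¹ * opX q b f x + opY q a b f x) := by
  simp only [opX, opY, inv_mul_cancel_left₀ hq, mul_inv_cancel_left₀ hq]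
  field_simp
  ring

theorem opY_opZ_commutation (hq : q ≠ 0) (ha : a ≠ 0) (hb : b ≠ 0) (f : ℝ → ℝ) {x : ℝ}
    (hx : x ≠ 0) :
    q * opY q a b (opZ q b f) x - opZ q b (opY q a b f) x =
      (q - 1) * (-b⁻¹ * q⁻¹ * (1 + q) * opX q b f x - b * opY q a b f x +
        a⁻¹ * q * opZ q b f x + a⁻¹ * b⁻¹ * (1 - b) * (a - b * q) * f x) := by
  simp only [opX, opY, opZ, inv_mul_cancel_left₀ hq, mul_inv_cancel_left₀ hq]
  field_simp
  ring

theorem opZ_opX_commutation (hq : q ≠ 0) (f : ℝ → ℝ) {x : ℝ} (hx : x ≠ 0) :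
    q * opZ q b (opX q b f) x - opX q b (opZ q b f) x =
      (q - 1) * (-b * opX q b f x + q * opZ q b f x) := by
  unfold opX opZ
  field_simp
  ring

end Commutation

theorem pastro_algebra_relations_general (q a b : ℝ) (hq0 : q ≠ 0) (ha : a ≠ 0) (hb : b ≠ 0)
    (f : ℝ → ℝ) (x : ℝ) (hx : x ≠ 0) :
    (q * opX q b (opY q a b f) x - opY q a b (opX q b f) x =
        q * (q - 1) * (a⁻¹ * opX q b f x + opY q a b f x)) ∧
    (q * opY q a b (opZ q b f) x - opZ q b (opY q a b f) x =
        (q - 1) * (-b⁻¹ * q⁻¹ * (1 + q) * opX q b f x - b * opY q a b f x +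
          a⁻¹ * q * opZ q b f x + a⁻¹ * b⁻¹ * (1 - b) * (a - b * q) * f x)) ∧
    (q * opZ q b (opX q b f) x - opX q b (opZ q b f) x =
        (q - 1) * (-b * opX q b f x + q * opZ q b f x)) :=
  ⟨opX_opY_commutation hq0 hb f x, opY_opZ_commutation hq0 ha hb f hx,
    opZ_opX_commutation hq0 f hx⟩

/-- The commutation relations of the Pastro algebra realized by the triplet of
q-difference operators `X, Y, Z`. -/
theorem pastro_algebra_relations (q a b : ℝ) (hq0 : q ≠ 0) (hq1 : q ≠ 1) (ha : a ≠ 0) (hb : b ≠ 0)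
    (f : ℝ → ℝ) (x : ℝ) (hx : x ≠ 0) :
    (q * opX q b (opY q a b f) x - opY q a b (opX q b f) x =
        q * (q - 1) * (a⁻¹ * opX q b f x + opY q a b f x)) ∧
    (q * opY q a b (opZ q b f) x - opZ q b (opY q a b f) x =
        (q - 1) * (-b⁻¹ * q⁻¹ * (1 + q) * opX q b f x - b * opY q a b f x +
          a⁻¹ * q * opZ q b f x + a⁻¹ * b⁻¹ * (1 - b) * (a - b * q) * f x)) ∧
    (q * opZ q b (opX q b f) x - opX q b (opZ q b f) x =
        (q - 1) * (-b * opX q b f x + q * opZ q b f x)) :=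
  pastro_algebra_relations_general q a b hq0 ha hb f x hx
end

section
/- After the affine transformations X̃ = a/(bq(q-1)) X - a/(b(q-1)) I, Ỹ = b q^{-1} Y - a^{-1}b I, Z̃ = -a^{-1} Z - a^{-1}b I (where I is the identity operator), the Pastro-algebra relations take the standardized form: for every function f : ℝ → ℝ and every real x ≠ 0, (i) q(X̃Ỹ f)(x) - (ỸX̃ f)(x) = f(x); (ii) q(ỸZ̃ f)(x) - (Z̃Ỹ f)(x) = α₁ (X̃f)(x) + α₂ f(x); (iii) q(Z̃X̃ f)(x) - (X̃Z̃ f)(x) = f(x), where α₁ = a^{-2} b q^{-1} (q-1)^2 (q+1) and α₂ = a^{-2} q^{-1} (q-1)(ab + aq + bq). -/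
/-- The affinely transformed operator `X̃ = a/(bq(q-1)) X - a/(b(q-1)) I`. -/
noncomputable def opXt (q a b : ℝ) (f : ℝ → ℝ) (x : ℝ) : ℝ :=
  a / (b * q * (q - 1)) * opX q b f x - a / (b * (q - 1)) * f x

/-- The affinely transformed operator `Ỹ = b q⁻¹ Y - a⁻¹ b I`. -/
noncomputable def opYt (q a b : ℝ) (f : ℝ → ℝ) (x : ℝ) : ℝ :=
  b * q⁻¹ * opY q a b f x - a⁻¹ * b * f x

/-- The affinely transformed operator `Z̃ = -a⁻¹ Z - a⁻¹ b I`. -/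
noncomputable def opZt (q a b : ℝ) (f : ℝ → ℝ) (x : ℝ) : ℝ :=
  -a⁻¹ * opZ q b f x - a⁻¹ * b * f x

/-!
The operators `X, Y, Z` already satisfy q-commutation relations that close on the span of
`X, Y, Z, I`; the two involving `Z` are easy because `Z` is `x⁻¹ X`. An affine change
`T ↦ αT + β`, `S ↦ γS + δ` turns `qTS - ST` into
`αγ (qTS - ST) + (q - 1)(αδ T + βγ S + βδ)`, and the normalizing constants of `X̃, Ỹ, Z̃`
are the ones for which the unwanted generators cancel (leaving just `1` in the `X̃Ỹ` and `Z̃X̃`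
relations).
-/

def affineOp (α β : ℝ) (T : (ℝ → ℝ) → ℝ → ℝ) (f : ℝ → ℝ) : ℝ → ℝ :=
  α • T f + β • f

theorem affineOp_apply (α β : ℝ) (T : (ℝ → ℝ) → ℝ → ℝ) (f : ℝ → ℝ) (x : ℝ) :
    affineOp α β T f x = α * T f x + β * f x :=
  rfl

theorem qcomm_affineOp {T S : (ℝ → ℝ) → ℝ → ℝ} (hT : IsLinearMap ℝ T) (hS : IsLinearMap ℝ S)
    (q α β γ δ : ℝ) (f : ℝ → ℝ) (x : ℝ) :
    q * affineOp α β T (affineOp γ δ S f) x - affineOp γ δ S (affineOp α β T f) x =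
      α * γ * (q * T (S f) x - S (T f) x) +
        (q - 1) * (α * δ * T f x + β * γ * S f x + β * δ * f x) := by
  simp only [affineOp, hT.map_add, hT.map_smul, hS.map_add, hS.map_smul, Pi.add_apply,
    Pi.smul_apply, smul_eq_mul]
  ring

section

variable (q a b : ℝ)

theorem isLinearMap_opX : IsLinearMap ℝ (opX q b) :=
  ⟨fun f g => by funext x; simp only [opX, Pi.add_apply]; ring,
   fun c f => by funext x; simp only [opX, Pi.smul_apply, smul_eq_mul]; ring⟩

theorem isLinearMap_opY : IsLinearMap ℝ (opY q a b) :=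
  ⟨fun f g => by funext x; simp only [opY, Pi.add_apply]; ring,
   fun c f => by funext x; simp only [opY, Pi.smul_apply, smul_eq_mul]; ring⟩

theorem isLinearMap_opZ : IsLinearMap ℝ (opZ q b) :=
  ⟨fun f g => by funext x; simp only [opZ, Pi.add_apply]; ring,
   fun c f => by funext x; simp only [opZ, Pi.smul_apply, smul_eq_mul]; ring⟩

theorem opXt_eq_affineOp :
    opXt q a b = affineOp (a / (b * q * (q - 1))) (-(a / (b * (q - 1)))) (opX q b) := by
  funext f x
  rw [opXt, affineOp_apply]
  ring

theorem opYt_eq_affineOp : opYt q a b = affineOp (b * q⁻¹) (-(a⁻¹ * b)) (opY q a b) := by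
  funext f x
  rw [opYt, affineOp_apply]
  ring

theorem opZt_eq_affineOp : opZt q a b = affineOp (-a⁻¹) (-(a⁻¹ * b)) (opZ q b) := by
  funext f x
  rw [opZt, affineOp_apply]
  ring

variable {q} (f : ℝ → ℝ) (x : ℝ)

theorem qcomm_opX_opY (hq : q ≠ 0) (hb : b ≠ 0) :
    q * opX q b (opY q a b f) x - opY q a b (opX q b f) x =
      (q - 1) * (q * opY q a b f x + q * a⁻¹ * opX q b f x) := by
  have hqq : q⁻¹ * (q * x) = x := by field_simp
  have hqq' : q * (q⁻¹ * x) = x := by field_simp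
  simp only [opX, opY, hqq, hqq']
  field_simp
  ring

theorem qcomm_opY_opZ (hq : q ≠ 0) (hb : b ≠ 0) (hx : x ≠ 0) :
    q * opY q a b (opZ q b f) x - opZ q b (opY q a b f) x =
      (q - 1) * (q * a⁻¹ * opZ q b f x - b * opY q a b f x - (q + 1) * (b * q)⁻¹ * opX q b f x
        + (b * q * a⁻¹ - q * a⁻¹ + b⁻¹ - 1) * f x) := by
  have hqq : q⁻¹ * (q * x) = x := by field_simp
  have hqq' : q * (q⁻¹ * x) = x := by field_simp
  simp only [opX, opY, opZ, hqq, hqq']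
  field_simp
  ring

theorem qcomm_opZ_opX (hq : q ≠ 0) (hx : x ≠ 0) :
    q * opZ q b (opX q b f) x - opX q b (opZ q b f) x =
      (q - 1) * (q * opZ q b f x - b * opX q b f x) := by
  simp only [opX, opZ]
  field_simp
  ring

end

/-- The standardized Pastro-algebra relations for the affinely transformed
operators `X̃, Ỹ, Z̃`. -/
theorem pastro_algebra_standardized (q a b : ℝ) (hq0 : q ≠ 0) (hq1 : q ≠ 1) (ha : a ≠ 0) (hb : b ≠ 0)
    (f : ℝ → ℝ) (x : ℝ) (hx : x ≠ 0) :
    (q * opXt q a b (opYt q a b f) x - opYt q a b (opXt q a b f) x = f x) ∧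
    (q * opYt q a b (opZt q a b f) x - opZt q a b (opYt q a b f) x =
        a⁻¹ ^ 2 * b * q⁻¹ * (q - 1) ^ 2 * (q + 1) * opXt q a b f x +
          a⁻¹ ^ 2 * q⁻¹ * (q - 1) * (a * b + a * q + b * q) * f x) ∧
    (q * opZt q a b (opXt q a b f) x - opXt q a b (opZt q a b f) x = f x) := by
  have hq1' : q - 1 ≠ 0 := sub_ne_zero.mpr hq1
  have hX := isLinearMap_opX q b
  have hY := isLinearMap_opY q a b
  have hZ := isLinearMap_opZ q b
  rw [opXt_eq_affineOp, opYt_eq_affineOp, opZt_eq_affineOp]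
  refine ⟨?_, ?_, ?_⟩
  · rw [qcomm_affineOp hX hY, qcomm_opX_opY a b f x hq0 hb]
    field_simp
    ring
  · rw [qcomm_affineOp hY hZ, qcomm_opY_opZ a b f x hq0 hb hx, affineOp_apply]
    field_simp
    ring
  · rw [qcomm_affineOp hZ hX, qcomm_opZ_opX b f x hq0 hx]
    field_simp
    ring
end

section
/- The Casimir element is central in the Pastro algebra realized by q-difference operators: define Q = (q^{-2} - 1) X̃ỸZ̃ + q^{-1} α₁ X̃² + q^{-1}(q^{-1} + 1)( α₂ X̃ + q^{-1} Ỹ + Z̃ ), where α₁ = a^{-2} b q^{-1} (q-1)^2 (q+1) and α₂ = a^{-2} q^{-1} (q-1)(ab + aq + bq). Then Q commutes with each of X̃, Ỹ, Z̃, i.e. for every function f : ℝ → ℝ and every real x ≠ 0, (QX̃ f)(x) = (X̃Q f)(x), (QỸ f)(x) = (ỸQ f)(x), and (QZ̃ f)(x) = (Z̃Q f)(x). -/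
/-- Structure constant `α₁` of the Pastro algebra. -/
noncomputable def alpha1 (q a b : ℝ) : ℝ := a⁻¹ ^ 2 * b * q⁻¹ * (q - 1) ^ 2 * (q + 1)

/-- Structure constant `α₂` of the Pastro algebra. -/
noncomputable def alpha2 (q a b : ℝ) : ℝ := a⁻¹ ^ 2 * q⁻¹ * (q - 1) * (a * b + a * q + b * q)

/-- The Casimir element `Q` of the Pastro algebra. -/
noncomputable def casimirQ (q a b : ℝ) (f : ℝ → ℝ) (x : ℝ) : ℝ :=
  (q⁻¹ ^ 2 - 1) * opXt q a b (opYt q a b (opZt q a b f)) x +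
    q⁻¹ * alpha1 q a b * opXt q a b (opXt q a b f) x +
    q⁻¹ * (q⁻¹ + 1) *
      (alpha2 q a b * opXt q a b f x + q⁻¹ * opYt q a b f x + opZt q a b f x)

/-!
At every nonzero point the Casimir element acts as the scalar `-(q + 1)(a + b + q) / (a q³)`:
expanding `X̃ỸZ̃` and `X̃²` as combinations of the values of `f` at `x`, `q⁻¹x`, `q⁻²x` and `qx`,
all shifted values cancel. Each of `X̃`, `Ỹ`, `Z̃` evaluates its argument only at `x` and at one
`q`-shift of `x`, both nonzero when `x` is, so each of them commutes with that scalar.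
-/

lemma opXt_apply {q a b : ℝ} (hq0 : q ≠ 0) (hq1 : q ≠ 1) (hb : b ≠ 0) (f : ℝ → ℝ) (x : ℝ) :
    opXt q a b f x =
      a * (x - q) / (b * q * (q - 1)) * f (q⁻¹ * x) - a * x / (q * (q - 1)) * f x := by
  have : q - 1 ≠ 0 := sub_ne_zero.mpr hq1
  unfold opXt opX
  field_simp
  ring

lemma opYt_apply {q a b : ℝ} (hq0 : q ≠ 0) (hb : b ≠ 0) (f : ℝ → ℝ) (x : ℝ) :
    opYt q a b f x = b / q * (x - q / a) * f (q * x) - x / q * f x := by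
  unfold opYt opY
  field_simp
  ring

lemma opZt_apply {q a b : ℝ} (ha : a ≠ 0) {x : ℝ} (hx : x ≠ 0) (f : ℝ → ℝ) :
    opZt q a b f x = (q - x) / (a * x) * f (q⁻¹ * x) - q / (a * x) * f x := by
  unfold opZt opZ
  field_simp
  ring

noncomputable def casimirScalar (q a b : ℝ) : ℝ := -((q + 1) * (a + b + q)) / (a * q ^ 3)

lemma casimirQ_apply {q a b : ℝ} (hq0 : q ≠ 0) (hq1 : q ≠ 1) (ha : a ≠ 0) (hb : b ≠ 0)
    (f : ℝ → ℝ) {x : ℝ} (hx : x ≠ 0) :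
    casimirQ q a b f x = casimirScalar q a b * f x := by
  have : q - 1 ≠ 0 := sub_ne_zero.mpr hq1
  simp only [casimirQ, casimirScalar, alpha1, alpha2, opXt_apply hq0 hq1 hb, opYt_apply hq0 hb,
    opZt_apply ha hx, opZt_apply ha (mul_ne_zero (inv_ne_zero hq0) hx),
    opZt_apply ha (mul_ne_zero hq0 hx), ← mul_assoc, inv_mul_cancel₀ hq0, mul_inv_cancel₀ hq0,
    one_mul]
  field_simp
  ring

lemma apply_comm_of_eq_smul_off_zero {Q T : (ℝ → ℝ) → ℝ → ℝ} {c s u v x : ℝ}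
    (hQ : ∀ f y, y ≠ 0 → Q f y = c * f y) (hT : ∀ f, T f x = u * f (s * x) - v * f x)
    (hs : s ≠ 0) (hx : x ≠ 0) (f : ℝ → ℝ) :
    Q (T f) x = T (Q f) x := by
  rw [hQ _ _ hx, hT, hT, hQ _ _ (mul_ne_zero hs hx), hQ _ _ hx]
  ring

/-- The Casimir element `Q` is central in the Pastro algebra realized by
q-difference operators. -/
theorem pastro_casimir_central (q a b : ℝ) (hq0 : q ≠ 0) (hq1 : q ≠ 1) (ha : a ≠ 0) (hb : b ≠ 0)
    (f : ℝ → ℝ) (x : ℝ) (hx : x ≠ 0) :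
    (casimirQ q a b (opXt q a b f) x = opXt q a b (casimirQ q a b f) x) ∧
    (casimirQ q a b (opYt q a b f) x = opYt q a b (casimirQ q a b f) x) ∧
    (casimirQ q a b (opZt q a b f) x = opZt q a b (casimirQ q a b f) x) := by
  have hQ : ∀ g y, y ≠ 0 → casimirQ q a b g y = casimirScalar q a b * g y :=
    fun g _ hy => casimirQ_apply hq0 hq1 ha hb g hy
  exact ⟨apply_comm_of_eq_smul_off_zero hQ (opXt_apply hq0 hq1 hb · x) (inv_ne_zero hq0) hx f,
    apply_comm_of_eq_smul_off_zero hQ (opYt_apply hq0 hb · x) hq0 hx f,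
    apply_comm_of_eq_smul_off_zero hQ (opZt_apply ha hx) (inv_ne_zero hq0) hx f⟩
end
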